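/- Let x ∈ (0,1) and let λ ∈ ℝ satisfy x = e^{−e^λ}(e^λ + 1). Then λ − log(−log x) ≥ −log 2 + log( 1 + √( 1 − 8/log x ) ). -/

import Mathlib

/-!
Put `u = e^λ` and `L = -log x = u - log (1 + u) > 0`. The claim is `1 + √(1 + 8/L) ≤ 2u/L`;
squaring, this is `L (u + 2) ≤ u²`, i.e. `2u ≤ (u + 2) log (1 + u)`, which is the classical
lower bound `log (1 + u) ≥ 2u / (u + 2)` for `u ≥ 0`.
-/

open Real

lemma sub_log_one_add_mul_add_two_le_sq {u : ℝ} (hu : 0 ≤ u) :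
    (u - log (1 + u)) * (u + 2) ≤ u ^ 2 := by
  have hlog : 2 * u ≤ log (1 + u) * (u + 2) :=
    (div_le_iff₀ (by linarith)).1 (le_log_one_add_of_nonneg hu)
  nlinarith

lemma one_add_sqrt_one_add_eight_div_le {u L : ℝ} (hu : 0 ≤ u) (hL : 0 < L)
    (h : L * (u + 2) ≤ u ^ 2) : 1 + √(1 + 8 / L) ≤ 2 * u / L := by
  have hLu : L ≤ u := by nlinarith
  suffices √(1 + 8 / L) ≤ 2 * u / L - 1 by linarith
  rw [sqrt_le_left (by rw [sub_nonneg, le_div_iff₀ hL]; linarith), ← sub_nonneg]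
  have key : (2 * u / L - 1) ^ 2 - (1 + 8 / L) = 4 * (u ^ 2 - L * (u + 2)) / L ^ 2 := by
    field_simp
    ring
  rw [key]
  have : 0 ≤ u ^ 2 - L * (u + 2) := by linarith
  positivity

theorem solution_lower (x lam : ℝ)
    (h : x = Real.exp (-(Real.exp lam)) * (Real.exp lam + 1)) :
    -Real.log 2 + Real.log (1 + Real.sqrt (1 - 8 / Real.log x))
      ≤ lam - Real.log (-Real.log x) := by
  set u := exp lam
  have hu : 0 < u := exp_pos lam
  have hL : -log x = u - log (1 + u) := by
    rw [h, log_mul (exp_ne_zero _) (by positivity), log_exp, add_comm u 1]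
    ring
  have hL_pos : 0 < -log x := by
    have := log_lt_sub_one_of_pos (by positivity : 0 < 1 + u) (by linarith)
    linarith
  have hsq := sub_log_one_add_mul_add_two_le_sq hu.le
  rw [← hL] at hsq
  calc -log 2 + log (1 + √(1 - 8 / log x))
      = -log 2 + log (1 + √(1 + 8 / -log x)) := by rw [div_neg, sub_eq_add_neg]
    _ ≤ -log 2 + log (2 * u / -log x) := by
      gcongr
      exact one_add_sqrt_one_add_eight_div_le hu.le hL_pos hsq
    _ = lam - log (-log x) := by
      rw [log_div (by positivity) hL_pos.ne', log_mul two_ne_zero hu.ne', log_exp]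
      ring
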